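/- For every $\delta > 0$ and $a, b > 0$ there exists $t_0 > 0$ such that for all $t \in (0, t_0)$, $\int_0^t \exp\left(-\frac{a}{4s} - \frac{b}{4(t-s)}\right) ds \leq \exp\left(-\frac{(\sqrt{a}+\sqrt{b})^2 - \delta}{4t}\right)$. -/

import Mathlib

/-!
For `0 < s < t` the two-point case of the Cauchy–Schwarz (Sedrakyan) inequality gives
`a / (4 s) + b / (4 (t - s)) ≥ (√a + √b)² / (4 t)`, so the integrand is at most
`exp (-(√a + √b)² / (4 t))` and the integral at most `t` times that. For `t < 1` the factor
`t` is absorbed by `exp (δ / (4 t)) ≥ 1`.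
-/

open MeasureTheory Set

lemma add_sq_div_add_le_sq_div_add_sq_div (p q : ℝ) {u v : ℝ} (hu : 0 < u) (hv : 0 < v) :
    (p + q) ^ 2 / (u + v) ≤ p ^ 2 / u + q ^ 2 / v := by
  rw [div_add_div _ _ hu.ne' hv.ne', div_le_div_iff₀ (by positivity) (by positivity)]
  nlinarith [sq_nonneg (p * v - q * u), mul_pos hu hv]

lemma sqrt_add_sqrt_sq_div_le {a b s t : ℝ} (ha : 0 ≤ a) (hb : 0 ≤ b) (hs : 0 < s)
    (hst : s < t) :
    (√a + √b) ^ 2 / (4 * t) ≤ a / (4 * s) + b / (4 * (t - s)) := by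
  have h := add_sq_div_add_le_sq_div_add_sq_div (√a) (√b)
    (mul_pos four_pos hs) (mul_pos four_pos (sub_pos.2 hst))
  rwa [Real.sq_sqrt ha, Real.sq_sqrt hb, ← mul_add, add_sub_cancel] at h

lemma intervalIntegral.integral_le_mul_of_le_of_mem_Ioo {f : ℝ → ℝ} {a b C : ℝ}
    (hab : a ≤ b) (h : ∀ x ∈ Ioo a b, ‖f x‖ ≤ C) : ∫ x in a..b, f x ≤ C * (b - a) := by
  have h_ae : ∀ᵐ x, x ∈ uIoc a b → ‖f x‖ ≤ C := by
    filter_upwards [Measure.ae_ne volume b] with x hxb hx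
    rw [uIoc_of_le hab] at hx
    exact h x ⟨hx.1, lt_of_le_of_ne hx.2 hxb⟩
  calc ∫ x in a..b, f x ≤ ‖∫ x in a..b, f x‖ := Real.le_norm_self _
    _ ≤ C * |b - a| := intervalIntegral.norm_integral_le_of_norm_le_const_ae h_ae
    _ = C * (b - a) := by rw [abs_of_nonneg (sub_nonneg.2 hab)]

lemma integral_exp_neg_div_sub_div_le {a b t : ℝ} (ha : 0 ≤ a) (hb : 0 ≤ b) (ht : 0 ≤ t) :
    ∫ s in (0:ℝ)..t, Real.exp (-(a / (4 * s)) - b / (4 * (t - s))) ≤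
      t * Real.exp (-((√a + √b) ^ 2 / (4 * t))) := by
  have h := intervalIntegral.integral_le_mul_of_le_of_mem_Ioo
    (f := fun s => Real.exp (-(a / (4 * s)) - b / (4 * (t - s))))
    (C := Real.exp (-((√a + √b) ^ 2 / (4 * t)))) ht fun s ⟨hs, hst⟩ => by
      rw [Real.norm_of_nonneg (Real.exp_pos _).le, Real.exp_le_exp]
      linarith [sqrt_add_sqrt_sq_div_le ha hb hs hst]
  rwa [sub_zero, mul_comm] at h

theorem stmt9 (δ a b : ℝ) (hδ : 0 < δ) (ha : 0 < a) (hb : 0 < b) :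
    ∃ t0 > (0:ℝ), ∀ t ∈ Set.Ioo (0:ℝ) t0,
      ∫ s in (0:ℝ)..t, Real.exp (-(a / (4 * s)) - b / (4 * (t - s))) ≤
        Real.exp (-(((Real.sqrt a + Real.sqrt b) ^ 2 - δ) / (4 * t))) := by
  refine ⟨1, one_pos, fun t ⟨ht0, ht1⟩ => ?_⟩
  have h_split :
      -(((√a + √b) ^ 2 - δ) / (4 * t)) = δ / (4 * t) + -((√a + √b) ^ 2 / (4 * t)) := by
    ring
  have ht_le : t ≤ Real.exp (δ / (4 * t)) :=
    ht1.le.trans (Real.one_le_exp (by positivity))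
  calc _ ≤ t * Real.exp (-((√a + √b) ^ 2 / (4 * t))) :=
        integral_exp_neg_div_sub_div_le ha.le hb.le ht0.le
    _ ≤ Real.exp (δ / (4 * t)) * Real.exp (-((√a + √b) ^ 2 / (4 * t))) := by gcongr
    _ = _ := by rw [h_split, Real.exp_add]
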